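/- (Termination bound after Case III) In the parity-seeking deletion algorithm for 2-3 red-black trees, once Case III is applied (x black with red sibling y), the deficiency is resolved after at most two further rule applications: if x's new black sibling C has a red child, one application of the Case II rotation rules resolves the deficiency; otherwise recoloring C red transfers the deficiency to the now-red former parent B, which is immediately resolved by Case I. -/

import Mathlib

inductive Color where
  | red : Color
  | black : Color
deriving DecidableEq

inductive RBTree (α : Type) where
  | nil : RBTree α
  | node : Color → RBTree α → α → RBTree α → RBTree α

namespace RBTree

variable {α : Type}

/-- The color of a tree's root; external (nil) positions count as black. -/
def color : RBTree α → Color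
  | .nil => Color.black
  | .node c _ _ _ => c

/-- Inorder traversal of the keys. -/
def inorder : RBTree α → List α
  | .nil => []
  | .node _ l k r => inorder l ++ k :: inorder r

/-- `BH t n`: every path from the root of `t` to an external node contains
exactly `n` black nodes (property (3)). -/
inductive BH : RBTree α → ℕ → Prop where
  | nil : BH RBTree.nil 0
  | red {l r : RBTree α} {k : α} {n : ℕ} :
      BH l n → BH r n → BH (RBTree.node Color.red l k r) n
  | black {l r : RBTree α} {k : α} {n : ℕ} :
      BH l n → BH r n → BH (RBTree.node Color.black l k r) (n + 1)

/-- Property (2): every red node has black children (equivalently, a red node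
never has a red parent). -/
def NoRedRed : RBTree α → Prop
  | .nil => True
  | .node c l _ r =>
      (c = Color.red → color l = Color.black ∧ color r = Color.black) ∧
      NoRedRed l ∧ NoRedRed r

/-- The 2-3 condition: no node has two red children. -/
def No2Red : RBTree α → Prop
  | .nil => True
  | .node _ l _ r =>
      ¬(color l = Color.red ∧ color r = Color.red) ∧ No2Red l ∧ No2Red r

/-- A red-black tree: black root, no red-red violation, uniform black counts. -/
def IsRB (t : RBTree α) : Prop :=
  color t = Color.black ∧ NoRedRed t ∧ ∃ n, BH t n

/-- A 2-3 red-black tree: a red-black tree where no node has two red children. -/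
def Is23RB (t : RBTree α) : Prop := IsRB t ∧ No2Red t

/-- Recolor the root black. -/
def setBlack : RBTree α → RBTree α
  | .nil => .nil
  | .node _ l k r => .node Color.black l k r

/-- `Occurs s t`: `s` occurs as a subtree of `t`. -/
inductive Occurs : RBTree α → RBTree α → Prop where
  | refl (t : RBTree α) : Occurs t t
  | left {s l : RBTree α} (c : Color) (k : α) (r : RBTree α) :
      Occurs s l → Occurs s (RBTree.node c l k r)
  | right {s r : RBTree α} (c : Color) (k : α) (l : RBTree α) :
      Occurs s r → Occurs s (RBTree.node c l k r)

/-- `Replace s s' t t'`: `t'` is obtained from `t` by replacing one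
occurrence of the subtree `s` by `s'`. -/
inductive Replace (s s' : RBTree α) : RBTree α → RBTree α → Prop where
  | here : Replace s s' s s'
  | left {l l' : RBTree α} (c : Color) (k : α) (r : RBTree α) :
      Replace s s' l l' → Replace s s' (RBTree.node c l k r) (RBTree.node c l' k r)
  | right {r r' : RBTree α} (c : Color) (k : α) (l : RBTree α) :
      Replace s s' r r' → Replace s s' (RBTree.node c l k r) (RBTree.node c l k r')

/-- The list of black-node counts along all root-to-external paths
(in left-to-right order of the external nodes). -/
def bpaths : RBTree α → List ℕ
  | .nil => [0]
  | .node c l _ r =>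
      (bpaths l ++ bpaths r).map (fun m => m + if c = Color.black then 1 else 0)

/-- Height: the maximum number of edges on a path from the root to an external node. -/
def height : RBTree α → ℕ
  | .nil => 0
  | .node _ l _ r => max (height l) (height r) + 1

/-- Number of internal nodes. -/
def size : RBTree α → ℕ
  | .nil => 0
  | .node _ l _ r => size l + size r + 1

end RBTree

open RBTree

/-! After Case III, `x` (black-height `n`) hangs under a red parent whose other child `C` is
black of black-height `n + 1`. Each outcome rebuilds that parent's subtree from `x` and the
children or grandchildren of `C`, all of black-height `n`, with black nodes above every red one;
so it is again a 2-3 red-black subtree of black-height `n + 1`, and the untouched sibling `yr`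
brings the whole configuration back to `n + 2`. -/

namespace RBTree

variable {α : Type}

def Is23RBSubtree (t : RBTree α) (n : ℕ) : Prop := NoRedRed t ∧ No2Red t ∧ BH t n

namespace Is23RBSubtree

variable {l r : RBTree α} {k : α} {n : ℕ}

theorem node_red (hl : Is23RBSubtree l n) (hr : Is23RBSubtree r n)
    (hlc : color l = Color.black) (hrc : color r = Color.black) :
    Is23RBSubtree (node Color.red l k r) n :=
  ⟨⟨fun _ => ⟨hlc, hrc⟩, hl.1, hr.1⟩, ⟨by simp [hlc], hl.2.1, hr.2.1⟩, BH.red hl.2.2 hr.2.2⟩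

theorem node_black (hl : Is23RBSubtree l n) (hr : Is23RBSubtree r n)
    (hlr : color l = Color.black ∨ color r = Color.black) :
    Is23RBSubtree (node Color.black l k r) (n + 1) :=
  ⟨⟨nofun, hl.1, hr.1⟩, ⟨by rcases hlr with h | h <;> simp [h], hl.2.1, hr.2.1⟩,
    BH.black hl.2.2 hr.2.2⟩

theorem of_node_red (h : Is23RBSubtree (node Color.red l k r) n) :
    Is23RBSubtree l n ∧ Is23RBSubtree r n ∧ color l = Color.black ∧ color r = Color.black := by
  obtain ⟨⟨hc, hl, hr⟩, ⟨-, hl2, hr2⟩, hbh⟩ := h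
  cases hbh with
  | red hlbh hrbh => exact ⟨⟨hl, hl2, hlbh⟩, ⟨hr, hr2, hrbh⟩, hc rfl⟩

theorem of_node_black (h : Is23RBSubtree (node Color.black l k r) (n + 1)) :
    Is23RBSubtree l n ∧ Is23RBSubtree r n ∧ (color l = Color.black ∨ color r = Color.black) := by
  obtain ⟨⟨-, hl, hr⟩, ⟨hlr, hl2, hr2⟩, hbh⟩ := h
  cases hbh with
  | black hlbh hrbh =>
    refine ⟨⟨hl, hl2, hlbh⟩, ⟨hr, hr2, hrbh⟩, ?_⟩
    cases hcl : color l <;> cases hcr : color r <;> simp_all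

end Is23RBSubtree

open Is23RBSubtree

variable {x a b cl cr : RBTree α} {kp ck wk : α} {n : ℕ}

theorem is23RBSubtree_rotate_of_far_red (hx : Is23RBSubtree x n)
    (hC : Is23RBSubtree (node Color.black cl ck (node Color.red a wk b)) (n + 1)) :
    Is23RBSubtree (node Color.red (node Color.black x kp cl) ck (node Color.black a wk b))
      (n + 1) := by
  obtain ⟨hcl, hcr, hcol⟩ := hC.of_node_black
  obtain ⟨ha, hb, hac, -⟩ := hcr.of_node_red
  exact node_red (node_black hx hcl (.inr (hcol.resolve_right nofun)))
    (node_black ha hb (.inl hac)) rfl rfl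

theorem is23RBSubtree_rotate_of_near_red (hx : Is23RBSubtree x n)
    (hC : Is23RBSubtree (node Color.black (node Color.red a wk b) ck cr) (n + 1)) :
    Is23RBSubtree (node Color.red (node Color.black x kp a) wk (node Color.black b ck cr))
      (n + 1) := by
  obtain ⟨hcl, hcr, -⟩ := hC.of_node_black
  obtain ⟨ha, hb, hac, hbc⟩ := hcl.of_node_red
  exact node_red (node_black hx ha (.inr hac)) (node_black hb hcr (.inl hbc)) rfl rfl

theorem is23RBSubtree_recolor_of_black_children (hx : Is23RBSubtree x n)
    (hxc : color x = Color.black) (hC : Is23RBSubtree (node Color.black cl ck cr) (n + 1))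
    (hclc : color cl = Color.black) (hcrc : color cr = Color.black) :
    Is23RBSubtree (node Color.black x kp (node Color.red cl ck cr)) (n + 1) := by
  obtain ⟨hcl, hcr, -⟩ := hC.of_node_black
  exact node_black hx (node_red hcl hcr hclc hcrc) (.inl hxc)

end RBTree

/-- Termination bound after Case III: in the parity-seeking
deletion algorithm for 2-3 red-black trees, suppose Case III has just been
applied: `x` (black, black-height `n`) was the deficient root with red sibling
`y = node red C ky yr`, and after the rotation the configuration is
`q = node black (node red x kp C) ky yr` with `x`'s new black sibling
`C = node black cl ck cr`.  Then the deficiency is resolved after at most two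
further rule applications:
* if `C` has a red child, one application of the Case II rotation rules yields
  a subtree with the same inorder traversal, no red-red violation, no node
  with two red children, and black count `n + 2` on all root-to-external
  paths (the pre-deletion value) — resolved in one step;
* otherwise recoloring `C` red transfers the deficiency to the now-red former
  parent `B`, which is immediately resolved by Case I (recoloring `B` black),
  again yielding a valid configuration with black count `n + 2`. -/
theorem caseIII_resolves_in_two_steps
    {α : Type} (x cl cr yr : RBTree α) (kp ck ky : α) (n : ℕ)
    (hxc : color x = Color.black) (hxrr : NoRedRed x) (hx2 : No2Red x)
    (hxbh : BH x n)
    (hyrr : NoRedRed (RBTree.node Color.red (RBTree.node Color.black cl ck cr) ky yr))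
    (hy2 : No2Red (RBTree.node Color.red (RBTree.node Color.black cl ck cr) ky yr))
    (hybh : BH (RBTree.node Color.red (RBTree.node Color.black cl ck cr) ky yr) (n + 1)) :
    -- `C` has a red far child: one Case II rotation resolves the deficiency
    (∀ (a : RBTree α) (wk : α) (b : RBTree α), cr = RBTree.node Color.red a wk b →
      inorder (RBTree.node Color.black
          (RBTree.node Color.red (RBTree.node Color.black x kp cl) ck
            (RBTree.node Color.black a wk b)) ky yr) =
        inorder (RBTree.node Color.black
          (RBTree.node Color.red x kp (RBTree.node Color.black cl ck cr)) ky yr) ∧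
      NoRedRed (RBTree.node Color.black
          (RBTree.node Color.red (RBTree.node Color.black x kp cl) ck
            (RBTree.node Color.black a wk b)) ky yr) ∧
      No2Red (RBTree.node Color.black
          (RBTree.node Color.red (RBTree.node Color.black x kp cl) ck
            (RBTree.node Color.black a wk b)) ky yr) ∧
      BH (RBTree.node Color.black
          (RBTree.node Color.red (RBTree.node Color.black x kp cl) ck
            (RBTree.node Color.black a wk b)) ky yr) (n + 2)) ∧
    -- `C` has a red near child: one Case II double rotation resolves it
    (∀ (a : RBTree α) (wk : α) (b : RBTree α), cl = RBTree.node Color.red a wk b →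
      inorder (RBTree.node Color.black
          (RBTree.node Color.red (RBTree.node Color.black x kp a) wk
            (RBTree.node Color.black b ck cr)) ky yr) =
        inorder (RBTree.node Color.black
          (RBTree.node Color.red x kp (RBTree.node Color.black cl ck cr)) ky yr) ∧
      NoRedRed (RBTree.node Color.black
          (RBTree.node Color.red (RBTree.node Color.black x kp a) wk
            (RBTree.node Color.black b ck cr)) ky yr) ∧
      No2Red (RBTree.node Color.black
          (RBTree.node Color.red (RBTree.node Color.black x kp a) wk
            (RBTree.node Color.black b ck cr)) ky yr) ∧
      BH (RBTree.node Color.black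
          (RBTree.node Color.red (RBTree.node Color.black x kp a) wk
            (RBTree.node Color.black b ck cr)) ky yr) (n + 2)) ∧
    -- both children of `C` black: recolor `C` red (Case II) and then `B` black (Case I)
    (color cl = Color.black → color cr = Color.black →
      inorder (RBTree.node Color.black
          (RBTree.node Color.black x kp (RBTree.node Color.red cl ck cr)) ky yr) =
        inorder (RBTree.node Color.black
          (RBTree.node Color.red x kp (RBTree.node Color.black cl ck cr)) ky yr) ∧
      NoRedRed (RBTree.node Color.black
          (RBTree.node Color.black x kp (RBTree.node Color.red cl ck cr)) ky yr) ∧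
      No2Red (RBTree.node Color.black
          (RBTree.node Color.black x kp (RBTree.node Color.red cl ck cr)) ky yr) ∧
      BH (RBTree.node Color.black
          (RBTree.node Color.black x kp (RBTree.node Color.red cl ck cr)) ky yr) (n + 2)) := by
  have hx : Is23RBSubtree x n := ⟨hxrr, hx2, hxbh⟩
  have hy : Is23RBSubtree (node Color.red (node Color.black cl ck cr) ky yr) (n + 1) :=
    ⟨hyrr, hy2, hybh⟩
  obtain ⟨hC, hyr, -, hyrc⟩ := hy.of_node_red
  refine ⟨?_, ?_, ?_⟩
  · rintro a wk b rfl
    exact ⟨by simp [inorder],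
      (is23RBSubtree_rotate_of_far_red hx hC).node_black hyr (.inr hyrc)⟩
  · rintro a wk b rfl
    exact ⟨by simp [inorder],
      (is23RBSubtree_rotate_of_near_red hx hC).node_black hyr (.inr hyrc)⟩
  · intro hclc hcrc
    exact ⟨rfl,
      (is23RBSubtree_recolor_of_black_children hx hxc hC hclc hcrc).node_black hyr (.inr hyrc)⟩
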